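/- arXiv:2601.16595 — 2 statements merged into one kernel-verified Lean document; each statement's English description precedes it below -/
import Mathlib

section
/- Let (Ω, F, μ) be a probability space on a standard Borel space and let m ≤ F be a sub-σ-algebra (generated by the covariates X). Let 𝒵 and 𝒯 be measurable spaces, Z : Ω → 𝒵 a measurable random variable, t : 𝒵 → 𝒯 a surjective measurable exposure mapping, and Y : 𝒵 → Ω → ℝ a family of measurable potential outcomes satisfying fiber invariance (t(z) = t(z') implies Y(z) = Y(z')), with induced exposure-level potential outcomes Ỹ : 𝒯 → Ω → ℝ satisfying Y(z) = Ỹ(t(z)) for all z ∈ 𝒵. If strong ignorability holds, i.e., for every z ∈ 𝒵 the random variables Y(z) and Z are conditionally independent given m, then strong ignorability holds under the exposure mapping: for every τ ∈ 𝒯, the random variables Ỹ(τ) and T := t ∘ Z are conditionally independent given m. -/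
open MeasureTheory ProbabilityTheory

theorem strong_ignorability_under_exposure_mapping_general
    {Ω : Type*} {mΩ : MeasurableSpace Ω} [StandardBorelSpace Ω]
    (μ : Measure Ω) [IsProbabilityMeasure μ]
    (m : MeasurableSpace Ω) (hm : m ≤ mΩ)
    {𝒵 𝒯 : Type*} [MeasurableSpace 𝒵] [MeasurableSpace 𝒯]
    (Z : Ω → 𝒵)
    (t : 𝒵 → 𝒯) (ht_surj : Function.Surjective t) (ht_meas : Measurable t)
    (Y : 𝒵 → Ω → ℝ)
    (Ytilde : 𝒯 → Ω → ℝ) (hfactor : ∀ z : 𝒵, Y z = Ytilde (t z))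
    (h_ignor : ∀ z : 𝒵, CondIndepFun m hm (Y z) Z μ) :
    ∀ τ : 𝒯, CondIndepFun m hm (Ytilde τ) (t ∘ Z) μ := by
  intro τ
  obtain ⟨z, rfl⟩ := ht_surj τ
  simpa only [hfactor z, Function.id_comp] using (h_ignor z).comp measurable_id ht_meas

/-- **Strong ignorability under exposure mapping (Corollary 1 of the paper).**
Let `t : 𝒵 → 𝒯` be a surjective measurable exposure mapping, `Z : Ω → 𝒵` the treatment,
and `Y : 𝒵 → Ω → ℝ` a fiber-invariant family of measurable potential outcomes with induced
exposure-level potential outcomes `Ytilde : 𝒯 → Ω → ℝ` satisfying `Y z = Ytilde (t z)`.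
If for every `z` the potential outcome `Y z` is conditionally independent of `Z` given the
covariate σ-algebra `m`, then for every `τ`, `Ytilde τ` is conditionally independent of
`T := t ∘ Z` given `m`. -/
theorem strong_ignorability_under_exposure_mapping
    {Ω : Type*} {mΩ : MeasurableSpace Ω} [StandardBorelSpace Ω]
    (μ : Measure Ω) [IsProbabilityMeasure μ]
    (m : MeasurableSpace Ω) (hm : m ≤ mΩ)
    {𝒵 𝒯 : Type*} [MeasurableSpace 𝒵] [MeasurableSpace 𝒯]
    (Z : Ω → 𝒵) (hZ : Measurable Z)
    (t : 𝒵 → 𝒯) (ht_surj : Function.Surjective t) (ht_meas : Measurable t)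
    (Y : 𝒵 → Ω → ℝ) (hY_meas : ∀ z : 𝒵, Measurable (Y z))
    (hY_fiber : ∀ z z' : 𝒵, t z = t z' → Y z = Y z')
    (Ytilde : 𝒯 → Ω → ℝ) (hfactor : ∀ z : 𝒵, Y z = Ytilde (t z))
    (h_ignor : ∀ z : 𝒵, CondIndepFun m hm (Y z) Z μ) :
    ∀ τ : 𝒯, CondIndepFun m hm (Ytilde τ) (t ∘ Z) μ :=
  strong_ignorability_under_exposure_mapping_general μ m hm Z t ht_surj ht_meas Y Ytilde hfactor
    h_ignor
end

section
/- Let (Ω, F, μ) be a probability space, let G ≤ F be a sub-σ-algebra, and let A ∈ F be an event whose conditional probability given G is almost surely positive: μ[1_A ∣ G](ω) > 0 for μ-almost every ω. If h₁, h₂ : Ω → ℝ are integrable G-measurable functions that agree μ-almost everywhere on A (i.e., for μ-almost every ω ∈ A, h₁(ω) = h₂(ω)), then h₁ = h₂ μ-almost everywhere on all of Ω. -/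
open MeasureTheory

private lemma integrable_indicator_one_aux {Ω : Type*} (mΩ : MeasurableSpace Ω)
    (μ : MeasureTheory.Measure Ω) [MeasureTheory.IsFiniteMeasure μ] {A : Set Ω}
    (hA : MeasurableSet A) :
    MeasureTheory.Integrable (A.indicator fun _ => (1 : ℝ)) μ :=
  (MeasureTheory.integrable_const (1 : ℝ)).indicator hA

/-- **Positivity/overlap lemma.**
If the conditional probability of the event `A` given the sub-σ-algebra `G` is almost surely
positive, then two integrable `G`-measurable functions that agree μ-a.e. on `A` agree
μ-a.e. on all of `Ω`. -/
theorem eq_ae_of_eq_ae_on_event_of_condexp_indicator_pos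
    {Ω : Type*} (G : MeasurableSpace Ω) {mΩ : MeasurableSpace Ω}
    (μ : Measure Ω) [IsProbabilityMeasure μ]
    (hG : G ≤ mΩ)
    (A : Set Ω) (hA : MeasurableSet A)
    (h_pos : ∀ᵐ ω ∂μ, 0 < (μ[A.indicator (fun _ => (1 : ℝ)) | G]) ω)
    (h₁ h₂ : Ω → ℝ)
    (h₁_meas : Measurable[G] h₁) (h₂_meas : Measurable[G] h₂)
    (h₁_int : Integrable h₁ μ) (h₂_int : Integrable h₂ μ)
    (h_eq_on : ∀ᵐ ω ∂μ, ω ∈ A → h₁ ω = h₂ ω) :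
    h₁ =ᵐ[μ] h₂ := by
  set f : Ω → ℝ := h₁ - h₂ with hf_def
  set g : Ω → ℝ := A.indicator (fun _ => (1 : ℝ)) with hg_def
  have hf_meas : StronglyMeasurable[G] f :=
    (h₁_meas.sub h₂_meas).stronglyMeasurable
  have hf_int : Integrable f μ := h₁_int.sub h₂_int
  have hg_int : Integrable g μ := integrable_indicator_one_aux mΩ μ hA
  have hfg_int : Integrable (f * g) μ := by
    refine hf_int.norm.mono' (hf_int.aestronglyMeasurable.mul hg_int.aestronglyMeasurable)
      (Filter.Eventually.of_forall fun ω => ?_)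
    simp only [Pi.mul_apply, norm_mul, hg_def, Set.indicator]
    split_ifs <;> simp
  -- f * g = 0 a.e.
  have hfg_zero : f * g =ᵐ[μ] 0 := by
    filter_upwards [h_eq_on] with ω hω
    by_cases hωA : ω ∈ A
    · simp [hf_def, hg_def, hωA, hω hωA, sub_eq_zero]
    · simp [hg_def, Set.indicator_of_notMem hωA]
  have h_pull : μ[f * g | G] =ᵐ[μ] f * μ[g | G] :=
    condExp_mul_of_stronglyMeasurable_left hf_meas hfg_int hg_int
  have h_zero : μ[f * g | G] =ᵐ[μ] 0 :=
    (condExp_congr_ae hfg_zero).trans (by simp [condExp_zero])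
  have h_final : f =ᵐ[μ] 0 := by
    filter_upwards [h_pos, h_pull.symm.trans h_zero] with ω hpos heq
    have : f ω * (μ[g | G]) ω = 0 := heq
    rcases mul_eq_zero.mp this with h | h
    · exact h
    · exact absurd h (ne_of_gt hpos)
  filter_upwards [h_final] with ω hω
  have : h₁ ω - h₂ ω = 0 := hω
  linarith
end
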